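/- Define h_n(p) = Σ_{λ : Γ(λ) = n} (−1)^{ℓ(λ)} p^{rep(λ)}. Then h_n(p) = (1−p)(h_{n−1}(p) − h_{n−2}(p)) for n ≥ 3, with h₁(p) = −1 and h₂(p) = p − 1. -/

import Mathlib

/-- A partition: a nonempty weakly decreasing list of positive integers. -/
def IsPartition (l : List ℕ) : Prop :=
  l ≠ [] ∧ l.Pairwise (· ≥ ·) ∧ ∀ x ∈ l, 0 < x

/-- The perimeter of a partition: largest part plus number of parts minus 1. -/
def perim (l : List ℕ) : ℕ := l.headI + l.length - 1

/-- Number of repeated parts: indices i with λ_i = λ_{i+1}. -/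
def repStat (l : List ℕ) : ℕ :=
  ((List.range (l.length - 1)).filter fun i => l.getD i 0 = l.getD (i + 1) 0).length

/-- Number of even parts. -/
def evenStat (l : List ℕ) : ℕ := l.countP fun x => x % 2 = 0
/-- h_n(p) = Σ_{Γ(λ)=n} (-1)^{ℓ(λ)} p^{rep(λ)} as a polynomial in p. -/
noncomputable def hpoly (n : ℕ) : Polynomial ℤ :=
  ∑ᶠ l ∈ {l : List ℕ | IsPartition l ∧ perim l = n},
    (-1 : Polynomial ℤ) ^ l.length * Polynomial.X ^ repStat l


/-!
Removing the largest part of a partition of perimeter `n + 1` other than `[n + 1]` leaves a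
partition of some perimeter `m ≤ n`, and every partition of perimeter `m ≤ n` arises exactly once
this way. Removal multiplies the weight by `-p` when `m = n` (the two largest parts were equal)
and by `-1` otherwise, so `h_{n+1} = -1 - p h_n - ∑_{m<n} h_m` with `h_0 = 0`; subtracting two
consecutive instances gives the recurrence.
-/

open Finset Polynomial

lemma perim_cons (a : ℕ) (t : List ℕ) : perim (a :: t) = a + t.length := by
  simp only [perim, List.headI, List.length_cons]; omega

lemma repStat_cons_cons (a b : ℕ) (t : List ℕ) :
    repStat (a :: b :: t) = (if a = b then 1 else 0) + repStat (b :: t) := by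
  unfold repStat
  simp only [List.length_cons, Nat.add_sub_cancel]
  rw [List.range_succ_eq_map, List.filter_cons, List.filter_map]
  simp only [List.getD_cons_zero, List.getD_cons_succ, Function.comp_def]
  by_cases hab : a = b <;> simp [hab, Nat.add_comm]

lemma isPartition_cons_cons {a b : ℕ} {t : List ℕ} :
    IsPartition (a :: b :: t) ↔ b ≤ a ∧ IsPartition (b :: t) := by
  simp only [IsPartition, ne_eq, reduceCtorEq, not_false_eq_true, true_and, List.pairwise_cons,
    List.mem_cons, forall_eq_or_imp]
  constructor
  · rintro ⟨⟨⟨hab, -⟩, hbt⟩, -, hpos⟩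
    exact ⟨hab, hbt, hpos⟩
  · rintro ⟨hab, ⟨hb, hbt⟩, hbpos, hpos⟩
    exact ⟨⟨⟨hab, fun x hx => (hb x hx).trans hab⟩, hb, hbt⟩, hbpos.trans_le hab, hbpos, hpos⟩

lemma IsPartition.headI_pos {l : List ℕ} (hl : IsPartition l) : 0 < l.headI := by
  obtain ⟨hne, -, hpos⟩ := hl
  obtain ⟨a, t, rfl⟩ := List.exists_cons_of_ne_nil hne
  exact hpos a List.mem_cons_self

lemma IsPartition.le_headI {l : List ℕ} (hl : IsPartition l) {x : ℕ} (hx : x ∈ l) :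
    x ≤ l.headI := by
  obtain ⟨-, hsorted, -⟩ := hl
  cases l with
  | nil => simp at hx
  | cons a t =>
    rcases List.mem_cons.1 hx with rfl | hx
    · rfl
    · exact (List.pairwise_cons.1 hsorted).1 x hx

lemma setOf_isPartition_perim_eq_finite (n : ℕ) :
    {l : List ℕ | IsPartition l ∧ perim l = n}.Finite := by
  refine ((List.finite_length_le (Fin (n + 1)) n).image (List.map Fin.val)).subset ?_
  rintro l ⟨hl, hn⟩
  have hlen : l.length ≤ n := by
    have := hl.headI_pos; unfold perim at hn; omega
  have hbound : ∀ x ∈ l, x < n + 1 := fun x hx => by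
    have := hl.le_headI hx; have := List.length_pos_iff.2 hl.1; unfold perim at hn; omega
  lift l to List (Fin (n + 1)) using hbound
  exact ⟨l, by simpa using hlen, rfl⟩

section

variable {R : Type*} [CommRing R]

def repWeight (p : R) (l : List ℕ) : R := (-1) ^ l.length * p ^ repStat l

lemma repWeight_singleton (p : R) (a : ℕ) : repWeight p [a] = -1 := by
  simp [repWeight, repStat]

lemma repWeight_cons_cons (p : R) (a b : ℕ) (t : List ℕ) :
    repWeight p (a :: b :: t) = -(if a = b then p else 1) * repWeight p (b :: t) := by
  simp only [repWeight, List.length_cons, repStat_cons_cons, pow_succ, pow_add]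
  split_ifs <;> ring

noncomputable def perimPartitions (n : ℕ) : Finset (List ℕ) :=
  (setOf_isPartition_perim_eq_finite n).toFinset

@[simp]
lemma mem_perimPartitions {n : ℕ} {l : List ℕ} :
    l ∈ perimPartitions n ↔ IsPartition l ∧ perim l = n :=
  Set.Finite.mem_toFinset _

lemma perimPartitions_zero : perimPartitions 0 = ∅ := by
  ext l
  simp only [mem_perimPartitions, Finset.notMem_empty, iff_false, not_and]
  intro hl
  have := hl.headI_pos
  have := List.length_pos_iff.2 hl.1
  unfold perim
  omega

-- The new part is the one that gives a partition of perimeter `m ≤ n` the perimeter `n + 1`.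
def prependToPerim (n m : ℕ) (l : List ℕ) : List ℕ := (l.headI + (n - m)) :: l

lemma prependToPerim_mem {n m : ℕ} (hm : m ≤ n) {l : List ℕ} (hl : l ∈ perimPartitions m) :
    prependToPerim n m l ∈ (perimPartitions (n + 1)).erase [n + 1] := by
  obtain ⟨hpart, hperim⟩ := mem_perimPartitions.1 hl
  obtain ⟨b, t, rfl⟩ := List.exists_cons_of_ne_nil hpart.1
  rw [perim_cons] at hperim
  simp only [prependToPerim, List.headI_cons, Finset.mem_erase, ne_eq, List.cons.injEq,
    reduceCtorEq, and_false, not_false_eq_true, mem_perimPartitions, isPartition_cons_cons,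
    perim_cons, List.length_cons, true_and]
  exact ⟨⟨by omega, hpart⟩, by omega⟩

lemma repWeight_prependToPerim (p : R) (n m : ℕ) {l : List ℕ} (hl : l ≠ []) :
    repWeight p (prependToPerim n m l) = -(if n ≤ m then p else 1) * repWeight p l := by
  obtain ⟨b, t, rfl⟩ := List.exists_cons_of_ne_nil hl
  simp only [prependToPerim, List.headI_cons, repWeight_cons_cons, add_eq_left,
    Nat.sub_eq_zero_iff_le]

lemma sum_erase_eq_sum_prependToPerim {M : Type*} [AddCommMonoid M] (f : List ℕ → M) (n : ℕ) :
    ∑ l ∈ (perimPartitions (n + 1)).erase [n + 1], f l =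
      ∑ x ∈ (range (n + 1)).sigma perimPartitions, f (prependToPerim n x.1 x.2) := by
  symm
  refine sum_nbij (fun x => prependToPerim n x.1 x.2) ?_ ?_ ?_ fun _ _ => rfl
  · rintro ⟨m, l⟩ hx
    obtain ⟨hm, hl⟩ := mem_sigma.1 hx
    exact prependToPerim_mem (Nat.lt_succ_iff.1 (mem_range.1 hm)) hl
  · rintro ⟨m, l⟩ hx ⟨m', l'⟩ hx' heq
    obtain rfl : l = l' := (List.cons.inj heq).2
    simp only [coe_sigma, Set.mem_sigma_iff, coe_range, Set.mem_Iio, mem_coe,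
      mem_perimPartitions] at hx hx'
    obtain rfl : m = m' := hx.2.2.symm.trans hx'.2.2
    rfl
  · intro l hl
    simp only [coe_erase, Set.mem_sdiff, mem_coe, mem_perimPartitions,
      Set.mem_singleton_iff] at hl
    obtain ⟨⟨hpart, hperim⟩, hne⟩ := hl
    match l, hpart, hperim, hne with
    | [], hpart, _, _ => exact absurd rfl hpart.1
    | [a], _, hperim, hne => simp_all [perim]
    | a :: b :: t, hpart, hperim, _ =>
      rw [isPartition_cons_cons] at hpart
      rw [perim_cons, List.length_cons] at hperim
      refine ⟨⟨perim (b :: t), b :: t⟩, ?_, ?_⟩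
      · simp only [coe_sigma, Set.mem_sigma_iff, coe_range, Set.mem_Iio, mem_coe,
          mem_perimPartitions, perim_cons]
        exact ⟨by omega, hpart.2, trivial⟩
      · simp only [prependToPerim, List.headI_cons, perim_cons, List.cons.injEq, and_true]
        omega

noncomputable def perimSum (p : R) (n : ℕ) : R := ∑ l ∈ perimPartitions n, repWeight p l

lemma perimSum_zero (p : R) : perimSum p 0 = 0 := by
  simp [perimSum, perimPartitions_zero]

lemma perimSum_succ (p : R) (n : ℕ) :
    perimSum p (n + 1) = -1 - p * perimSum p n - ∑ m ∈ range n, perimSum p m := by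
  have hsingle : [n + 1] ∈ perimPartitions (n + 1) := by simp [IsPartition, perim]
  rw [perimSum, ← add_sum_erase _ _ hsingle, sum_erase_eq_sum_prependToPerim, sum_sigma]
  have hterm : ∀ m ∈ range (n + 1),
      ∑ l ∈ perimPartitions m, repWeight p (prependToPerim n m l) =
        -(if n ≤ m then p else 1) * perimSum p m := fun m _ => by
    rw [perimSum, mul_sum]
    exact sum_congr rfl fun l hl => repWeight_prependToPerim p n m (mem_perimPartitions.1 hl).1.1
  have hlower : ∀ m ∈ range n, -(if n ≤ m then p else 1) * perimSum p m = -perimSum p m :=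
    fun m hm => by rw [if_neg (by simpa using hm)]; ring
  rw [sum_congr rfl hterm, sum_range_succ, if_pos le_rfl, sum_congr rfl hlower, sum_neg_distrib,
    repWeight_singleton]
  ring

lemma perimSum_add_two (p : R) (n : ℕ) :
    perimSum p (n + 2) = (1 - p) * (perimSum p (n + 1) - perimSum p n) := by
  have h₁ := perimSum_succ p (n + 1)
  have h₀ := perimSum_succ p n
  rw [sum_range_succ] at h₁
  linear_combination h₁ - h₀

end

lemma hpoly_eq_perimSum (n : ℕ) : hpoly n = perimSum (X : ℤ[X]) n :=
  finsum_mem_eq_finite_toFinset_sum _ _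

theorem hpoly_recurrence :
    hpoly 1 = -1 ∧ hpoly 2 = Polynomial.X - 1 ∧
    ∀ n, 3 ≤ n →
      hpoly n = (1 - Polynomial.X) * (hpoly (n - 1) - hpoly (n - 2)) := by
  simp only [hpoly_eq_perimSum]
  have h₁ : perimSum (X : ℤ[X]) 1 = -1 := by simp [perimSum_succ, perimSum_zero]
  refine ⟨h₁, ?_, fun n hn => ?_⟩
  · rw [perimSum_add_two, h₁, perimSum_zero]
    ring
  · obtain ⟨k, rfl⟩ : ∃ k, n = k + 2 := ⟨n - 2, by omega⟩
    exact perimSum_add_two (X : ℤ[X]) k
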